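/- arXiv:1610.01451 — 2 statements merged into one kernel-verified Lean document; each statement's English description precedes it below -/
import Mathlib

section
/- Let f : ℝ → ℝ be f(x) = |x|. Then the scaled valley transform λ·V_λ(f)(x) = λ·(C^u_λ(f)(x) − f(x)) satisfies lim_{λ→∞} λ·V_λ(f)(0) = 1/4, and lim_{λ→∞} λ·V_λ(f)(x) = 0 for every x ≠ 0. -/
open Filter Metric Set
open scoped Topology RealInnerProductSpace

/-- The convex envelope of `g`: pointwise supremum of convex functions below `g`. -/
noncomputable def convEnv {E : Type*} [NormedAddCommGroup E] [NormedSpace ℝ E]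
    (g : E → ℝ) (x : E) : ℝ :=
  sSup {y : ℝ | ∃ h : E → ℝ, ConvexOn ℝ Set.univ h ∧ (∀ z, h z ≤ g z) ∧ y = h x}

/-- Upper compensated convex transform. -/
noncomputable def upperT {E : Type*} [NormedAddCommGroup E] [NormedSpace ℝ E]
    (lam : ℝ) (g : E → ℝ) (x : E) : ℝ :=
  lam * ‖x‖ ^ 2 - convEnv (fun y => lam * ‖y‖ ^ 2 - g y) x

/-- Lower compensated convex transform. -/
noncomputable def lowerT {E : Type*} [NormedAddCommGroup E] [NormedSpace ℝ E]
    (lam : ℝ) (g : E → ℝ) (x : E) : ℝ :=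
  convEnv (fun y => g y + lam * ‖y‖ ^ 2) x - lam * ‖x‖ ^ 2

/-!
Put `q y = λ y² - |y|`, so that `λ V_λ(|·|) = λ (q - conv q)`. At `0`, the constant `-1/(4λ) = min q`
is a convex minorant of `q`, and no convex minorant can exceed it at `0`, the midpoint of the two
minimisers `±1/(2λ)`; hence `λ V_λ(|·|)(0) = 1/4` for every `λ > 0`. At `x ≠ 0`, as soon as
`λ |x| ≥ 1/2` the tangent line to `λ y² - sign(x) y` at `x` stays below `q`, so `conv q x = q x` and
`λ V_λ(|·|)(x) = 0`.
-/

section ConvexEnvelope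

variable {E : Type*} [NormedAddCommGroup E] [NormedSpace ℝ E] {g h : E → ℝ}

lemma bddAbove_convexMinorant_values (g : E → ℝ) (x : E) :
    BddAbove {y : ℝ | ∃ h : E → ℝ, ConvexOn ℝ univ h ∧ (∀ z, h z ≤ g z) ∧ y = h x} :=
  ⟨g x, by rintro _ ⟨h, -, hle, rfl⟩; exact hle x⟩

lemma le_convEnv (hc : ConvexOn ℝ univ h) (hle : ∀ z, h z ≤ g z) (x : E) :
    h x ≤ convEnv g x :=
  le_csSup (bddAbove_convexMinorant_values g x) ⟨h, hc, hle, rfl⟩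

lemma convEnv_le_convexCombo (hc : ConvexOn ℝ univ h) (hle : ∀ z, h z ≤ g z) (x y : E)
    {a b : ℝ} (ha : 0 ≤ a) (hb : 0 ≤ b) (hab : a + b = 1) :
    convEnv g (a • x + b • y) ≤ a * g x + b * g y := by
  refine csSup_le ⟨_, h, hc, hle, rfl⟩ ?_
  rintro _ ⟨h', hc', hle', rfl⟩
  calc h' (a • x + b • y) ≤ a • h' x + b • h' y := hc'.2 (mem_univ x) (mem_univ y) ha hb hab
    _ ≤ a * g x + b * g y := by
      simp only [smul_eq_mul]
      gcongr
      exacts [hle' x, hle' y]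

lemma convEnv_eq_of_touch (hc : ConvexOn ℝ univ h) (hle : ∀ z, h z ≤ g z) {x : E}
    (hx : h x = g x) : convEnv g x = g x := by
  refine le_antisymm ?_ (hx ▸ le_convEnv hc hle x)
  simpa using convEnv_le_convexCombo hc hle x x zero_le_one le_rfl (add_zero 1)

end ConvexEnvelope

lemma convexOn_affine (m b : ℝ) : ConvexOn ℝ univ (fun y : ℝ => m * y + b) :=
  (LinearMap.mulLeft ℝ m).convexOn convex_univ |>.add_const b

lemma sq_sub_abs_ge_min {lam : ℝ} (hl : 0 < lam) (y : ℝ) :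
    -(1 / (4 * lam)) ≤ lam * ‖y‖ ^ 2 - |y| := by
  have key : 4 * lam * (lam * |y| ^ 2 - |y| + 1 / (4 * lam)) = (2 * lam * |y| - 1) ^ 2 := by
    field_simp
    ring
  rw [Real.norm_eq_abs]
  nlinarith [sq_nonneg (2 * lam * |y| - 1)]

lemma convEnv_sq_sub_abs_zero {lam : ℝ} (hl : 0 < lam) :
    convEnv (fun y : ℝ => lam * ‖y‖ ^ 2 - |y|) 0 = -(1 / (4 * lam)) := by
  have hmin := sq_sub_abs_ge_min hl
  have hconst := convexOn_const (𝕜 := ℝ) (-(1 / (4 * lam))) (convex_univ (E := ℝ))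
  refine le_antisymm ?_ (le_convEnv hconst hmin 0)
  set a : ℝ := 1 / (2 * lam)
  have ha : 0 < a := by positivity
  have hqa : lam * a ^ 2 - a = -(1 / (4 * lam)) := by
    simp only [a]
    field_simp
    ring
  have hmid : (0 : ℝ) = (1 / 2 : ℝ) • a + (1 / 2 : ℝ) • -a := by simp
  rw [hmid]
  refine (convEnv_le_convexCombo hconst hmin a (-a) (by norm_num) (by norm_num)
    (by norm_num)).trans_eq ?_
  simp only [norm_neg, abs_neg, Real.norm_eq_abs, abs_of_pos ha]
  linarith

lemma abs_sub_mul_le_sq {lam s x : ℝ} (hl : 0 ≤ lam) (hs : |s| = 1) (hsx : s * x = |x|)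
    (hx : 1 ≤ 2 * lam * |x|) (y : ℝ) : |y| - s * y ≤ lam * (y - x) ^ 2 := by
  rcases (abs_eq zero_le_one).1 hs with rfl | rfl <;>
  rcases abs_cases x with ⟨hx', hx0⟩ | ⟨hx', hx0⟩ <;>
  rcases abs_cases y with ⟨hy', hy0⟩ | ⟨hy', hy0⟩ <;> rw [hx'] at hsx hx <;> rw [hy'] <;>
  nlinarith [mul_nonneg hl (sq_nonneg (y + x))]

lemma convEnv_sq_sub_abs_of_le {lam x : ℝ} (hl : 0 < lam) (hx : 1 ≤ 2 * lam * |x|) :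
    convEnv (fun y : ℝ => lam * ‖y‖ ^ 2 - |y|) x = lam * ‖x‖ ^ 2 - |x| := by
  obtain ⟨s, hs, hsx⟩ : ∃ s : ℝ, |s| = 1 ∧ s * x = |x| := by
    rcases abs_cases x with ⟨hx', -⟩ | ⟨hx', -⟩
    · exact ⟨1, abs_one, by rw [hx', one_mul]⟩
    · exact ⟨-1, by simp, by rw [hx', neg_one_mul]⟩
  refine convEnv_eq_of_touch (convexOn_affine (2 * lam * x - s) (-(lam * x ^ 2))) (fun y => ?_) ?_
  · have := abs_sub_mul_le_sq hl.le hs hsx hx y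
    simp only [Real.norm_eq_abs, sq_abs]
    nlinarith
  · simp only [Real.norm_eq_abs, sq_abs]
    rw [← hsx]
    ring

lemma upperT_abs_zero {lam : ℝ} (hl : 0 < lam) :
    upperT lam (fun y : ℝ => |y|) 0 = 1 / (4 * lam) := by
  rw [upperT, convEnv_sq_sub_abs_zero hl, norm_zero]
  ring

lemma upperT_abs_of_le {lam x : ℝ} (hl : 0 < lam) (hx : 1 ≤ 2 * lam * |x|) :
    upperT lam (fun y : ℝ => |y|) x = |x| := by
  simp only [upperT, convEnv_sq_sub_abs_of_le hl hx, sub_sub_cancel]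

theorem stmt_1 :
    Tendsto (fun lam : ℝ => lam * (upperT lam (fun y => |y|) 0 - |(0 : ℝ)|)) atTop
      (nhds (1 / 4)) ∧
    ∀ x : ℝ, x ≠ 0 →
      Tendsto (fun lam : ℝ => lam * (upperT lam (fun y => |y|) x - |x|)) atTop (nhds 0) := by
  constructor
  · refine tendsto_const_nhds.congr' ?_
    filter_upwards [eventually_gt_atTop 0] with lam hl
    rw [upperT_abs_zero hl, abs_zero, sub_zero]
    field_simp
  · intro x hx
    refine tendsto_const_nhds.congr' ?_
    have hx' : 0 < 2 * |x| := by positivity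
    filter_upwards [eventually_gt_atTop 0, eventually_ge_atTop (1 / (2 * |x|))] with lam hl hlx
    have hfar : 1 ≤ 2 * lam * |x| := by
      rw [div_le_iff₀ hx'] at hlx
      linarith
    rw [upperT_abs_of_le hl hfar, sub_self, mul_zero]
end

section
/- Let K ⊂ ℝⁿ be a nonempty compact set and let B̄_r(x₀) be its minimal bounding ball with bounding sphere S_r(x₀) = ∂B_r(x₀). Then x₀ belongs to the convex hull of K ∩ S_r(x₀). -/
open Filter Metric Set
open scoped Topology RealInnerProductSpace

/-- `(c, r)` is a minimal bounding ball of `K`. -/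
def IsMinBall {E : Type*} [NormedAddCommGroup E] (K : Set E) (c : E) (r : ℝ) : Prop :=
  0 ≤ r ∧ K ⊆ Metric.closedBall c r ∧ ∀ c' r', K ⊆ Metric.closedBall c' r' → r ≤ r'

/-!
If `x₀` were not in the convex hull of the contact set `S = K ∩ S_r(x₀)`, a hyperplane with
normal `v` would strictly separate `x₀` from `S` (the hull is compact by Carathéodory). Moving the
center from `x₀` to `x₀ + t • v` brings the points of `K` near `S` closer at first order in `t`,
while the points of `K` away from `S` stay in a strictly smaller ball around `x₀`. So for small
`t > 0` all of `K` lies in an open ball of radius `r`, hence by compactness in a closed ball of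
smaller radius, contradicting minimality.
-/

section ConvexHull

variable {E : Type*} [AddCommGroup E] [Module ℝ E]

def convexCombinations (k : ℕ) (s : Set E) : Set E :=
  (fun p : (Fin k → ℝ) × (Fin k → E) => ∑ i, p.1 i • p.2 i) ''
    (stdSimplex ℝ (Fin k) ×ˢ univ.pi fun _ => s)

lemma convexCombinations_subset_convexHull (k : ℕ) (s : Set E) :
    convexCombinations k s ⊆ convexHull ℝ s := by
  rintro _ ⟨⟨w, z⟩, ⟨⟨hw₀, hw₁⟩, hz⟩, rfl⟩
  exact (convex_convexHull ℝ s).sum_mem (fun i _ => hw₀ i) hw₁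
    fun i _ => subset_convexHull ℝ s (hz i (mem_univ i))

/-- Carathéodory's theorem: `finrank + 1` points suffice. -/
lemma convexHull_eq_iUnion_convexCombinations [FiniteDimensional ℝ E] (s : Set E) :
    convexHull ℝ s = ⋃ k : Fin (Module.finrank ℝ E + 2), convexCombinations k s := by
  refine Subset.antisymm (fun x hx => ?_)
    (iUnion_subset fun k => convexCombinations_subset_convexHull k s)
  obtain ⟨ι, _, z, w, hzs, hz, hw₀, hw₁, rfl⟩ := eq_pos_convex_span_of_mem_convexHull hx
  have hcard : Fintype.card ι < Module.finrank ℝ E + 2 := by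
    have := Submodule.finrank_le (vectorSpan ℝ (range z))
    have := hz.card_le_finrank_succ
    omega
  let e := (Fintype.equivFin ι).symm
  refine mem_iUnion.2 ⟨⟨_, hcard⟩, ⟨(w ∘ e, z ∘ e), ⟨⟨fun i => (hw₀ _).le, ?_⟩, ?_⟩, ?_⟩⟩
  · simpa using e.sum_comp w |>.trans hw₁
  · exact fun i _ => hzs (mem_range_self _)
  · exact e.sum_comp fun i => w i • z i

variable [TopologicalSpace E] [ContinuousAdd E] [ContinuousSMul ℝ E]

lemma IsCompact.convexCombinations (k : ℕ) {s : Set E} (hs : IsCompact s) :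
    IsCompact (convexCombinations k s) :=
  ((isCompact_stdSimplex ℝ (Fin k)).prod (isCompact_univ_pi fun _ => hs)).image (by fun_prop)

theorem IsCompact.convexHull [FiniteDimensional ℝ E] {s : Set E} (hs : IsCompact s) :
    IsCompact (convexHull ℝ s) := by
  rw [convexHull_eq_iUnion_convexCombinations]
  exact isCompact_iUnion fun k => hs.convexCombinations k

end ConvexHull

lemma IsCompact.exists_lt_subset_closedBall {α : Type*} [PseudoMetricSpace α] {K : Set α}
    {c : α} {r : ℝ} (hK : IsCompact K) (h : K ⊆ ball c r) : ∃ r' < r, K ⊆ closedBall c r' := by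
  rcases K.eq_empty_or_nonempty with rfl | hne
  · exact ⟨r - 1, by linarith, empty_subset _⟩
  obtain ⟨y, hy, hmax⟩ := hK.exists_isMaxOn hne (continuous_id.dist continuous_const).continuousOn
  exact ⟨dist y c, h hy, fun z hz => hmax hz⟩

lemma IsMinBall.not_subset_ball {α : Type*} [NormedAddCommGroup α] {K : Set α} {x₀ c : α}
    {r : ℝ} (h : IsMinBall K x₀ r) (hK : IsCompact K) : ¬ K ⊆ ball c r := fun hc => by
  obtain ⟨r', hr', hKr'⟩ := hK.exists_lt_subset_closedBall hc
  exact hr'.not_ge (h.2.2 c r' hKr')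

/-- The center `x₀ + t • v` works for small `t > 0`. -/
theorem exists_subset_ball_of_le_inner {E : Type*} [NormedAddCommGroup E]
    [InnerProductSpace ℝ E] {K : Set E} {x₀ v : E} {r δ : ℝ} (hK : IsCompact K)
    (hKr : K ⊆ closedBall x₀ r) (hδ : 0 < δ) (hv : ∀ y ∈ K ∩ sphere x₀ r, δ ≤ ⟪v, y - x₀⟫) :
    ∃ c, K ⊆ ball c r := by
  set K₁ := {y ∈ K | ⟪v, y - x₀⟫ ≤ δ / 2}
  have hK₁ : K₁ ⊆ ball x₀ r := fun y ⟨hyK, hy⟩ =>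
    (hKr hyK).lt_of_ne fun hyr => by linarith [hv y ⟨hyK, hyr⟩]
  have hK₁c : IsCompact K₁ :=
    hK.inter_right (isClosed_le (f := fun y => ⟪v, y - x₀⟫) (by fun_prop) continuous_const)
  obtain ⟨ρ, hρr, hρ⟩ := hK₁c.exists_lt_subset_closedBall hK₁
  obtain ⟨t, ht₀, ht⟩ := exists_pos_mul_lt (lt_min (sub_pos.2 hρr) hδ) (‖v‖ + ‖v‖ ^ 2)
  have htv : t * ‖v‖ < r - ρ := by
    nlinarith [min_le_left (r - ρ) δ, sq_nonneg ‖v‖]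
  have htv₂ : t * ‖v‖ ^ 2 < δ := by
    nlinarith [min_le_right (r - ρ) δ, norm_nonneg v]
  refine ⟨x₀ + t • v, fun y hy => ?_⟩
  by_cases hy₁ : ⟪v, y - x₀⟫ ≤ δ / 2
  · calc dist y (x₀ + t • v) ≤ dist y x₀ + dist x₀ (x₀ + t • v) := dist_triangle _ _ _
      _ ≤ ρ + t * ‖v‖ := by
        gcongr
        · exact hρ ⟨hy, hy₁⟩
        · simp [norm_smul, abs_of_pos ht₀]
      _ < r := by linarith
  · have hyr : ‖y - x₀‖ ≤ r := by simpa [dist_eq_norm] using hKr hy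
    have hsq : dist y (x₀ + t • v) ^ 2 < r ^ 2 :=
      calc dist y (x₀ + t • v) ^ 2
          = ‖y - x₀‖ ^ 2 - 2 * t * ⟪v, y - x₀⟫ + t * (t * ‖v‖ ^ 2) := by
            rw [dist_eq_norm, show y - (x₀ + t • v) = (y - x₀) - t • v by abel,
              norm_sub_sq_real, real_inner_smul_right, norm_smul, real_inner_comm,
              Real.norm_of_nonneg ht₀.le]
            ring
        _ < r ^ 2 := by nlinarith [norm_nonneg (y - x₀)]
    exact lt_of_pow_lt_pow_left₀ 2 ((norm_nonneg _).trans hyr) hsq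

theorem stmt_6_general {n : ℕ} (K : Set (EuclideanSpace ℝ (Fin n)))
    (hKc : IsCompact K) (x₀ : EuclideanSpace ℝ (Fin n)) (r : ℝ)
    (hmin : IsMinBall K x₀ r) :
    x₀ ∈ convexHull ℝ (K ∩ Metric.sphere x₀ r) := by
  by_contra hx₀
  set S := K ∩ sphere x₀ r
  obtain ⟨f, u, hfx₀, hfS⟩ := geometric_hahn_banach_point_closed (convex_convexHull ℝ S)
    (hKc.inter_right isClosed_sphere).convexHull.isClosed hx₀
  obtain ⟨c, hc⟩ := exists_subset_ball_of_le_inner (v := (InnerProductSpace.toDual ℝ _).symm f)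
    hKc hmin.2.1 (sub_pos.2 hfx₀) fun y hy => by
      rw [InnerProductSpace.toDual_symm_apply, map_sub]
      linarith [hfS y (subset_convexHull ℝ S hy)]
  exact hmin.not_subset_ball hKc hc

theorem stmt_6 {n : ℕ} (K : Set (EuclideanSpace ℝ (Fin n))) (hK : K.Nonempty)
    (hKc : IsCompact K) (x₀ : EuclideanSpace ℝ (Fin n)) (r : ℝ)
    (hmin : IsMinBall K x₀ r) :
    x₀ ∈ convexHull ℝ (K ∩ Metric.sphere x₀ r) :=
  stmt_6_general K hKc x₀ r hmin
end
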